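/- arXiv:1901.10787 — 2 statements merged into one kernel-verified Lean document; each statement's English description precedes it below -/
import Mathlib

section
/- For Lebesgue-almost every tuple of TT-cores G in the parameter space ℝ^D, provided there exists at least one tuple of TT-cores G₀ (with the same shapes and ranks) whose assembled matrix X(G₀) has rank min(I, J), the assembled matrix X(G) has full matrix rank: rank X(G) = min(I, J). -/
open MeasureTheory BigOperators Finset

noncomputable section

/-- The space of tuples of TT-cores with dimensions `Idim`, `Jdim` and TT-ranks `R`
(identified with the Euclidean space `ℝ^D`, `D = ∑ k, R (k-1) * Idim k * Jdim k * R k`). -/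
abbrev CoreSpace {N : ℕ} (Idim Jdim : Fin N → ℕ) (R : Fin (N + 1) → ℕ) : Type :=
  ∀ k : Fin N, Fin (R k.castSucc) → Fin (Idim k) → Fin (Jdim k) → Fin (R k.succ) → ℝ

/-- The assembled `I × J` matrix of a tuple of TT-cores:
`X(G)(i,j) = ∑_{r_1,…,r_{N−1}} ∏_k G^(k)(r_{k−1}, i_k, j_k, r_k)` (the boundary rank indices
`r_0, r_N` range over the one-element sets `Fin (R 0)`, `Fin (R N)` when `R 0 = R N = 1`). -/
noncomputable def ttMatrix {N : ℕ} (Idim Jdim : Fin N → ℕ) (R : Fin (N + 1) → ℕ)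
    (eI : Fin (∏ k, Idim k) ≃ (∀ k, Fin (Idim k)))
    (eJ : Fin (∏ k, Jdim k) ≃ (∀ k, Fin (Jdim k)))
    (G : CoreSpace Idim Jdim R) :
    Matrix (Fin (∏ k, Idim k)) (Fin (∏ k, Jdim k)) ℝ :=
  Matrix.of fun i j =>
    ∑ r : ∀ k : Fin (N + 1), Fin (R k),
      ∏ k : Fin N, G k (r k.castSucc) (eI i k) (eJ j k) (r k.succ)

/-!
The entries of `X(G)` are polynomials in the entries of the cores, hence so is every minor of
`X(G)`. Since `X(G₀)` has rank `min I J`, some `min I J`-minor does not vanish at `G₀`, so it is a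
nonzero polynomial. The zero set of a nonzero real polynomial is Lebesgue-null (by induction on
the number of variables and Fubini: for almost every value of the other variables the polynomial
in the first one has a nonzero leading coefficient, hence finitely many roots). So this minor is
nonzero, and `X(G)` has rank `min I J`, for almost every `G`.
-/

theorem LinearEquiv.quasiMeasurePreserving {E F : Type*}
    [NormedAddCommGroup E] [NormedSpace ℝ E] [FiniteDimensional ℝ E] [MeasurableSpace E]
    [BorelSpace E] [NormedAddCommGroup F] [NormedSpace ℝ F] [FiniteDimensional ℝ F]
    [MeasurableSpace F] [BorelSpace F] (μ : Measure E) [μ.IsAddHaarMeasure]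
    (ν : Measure F) [ν.IsAddHaarMeasure] (e : E ≃ₗ[ℝ] F) :
    Measure.QuasiMeasurePreserving e μ ν :=
  ⟨e.toLinearMap.continuous_of_finiteDimensional.measurable,
    Measure.absolutelyContinuous_isAddHaarMeasure _ _⟩

theorem ae_of_ae_ae_fin_cons {n : ℕ} {α : Type*} [MeasureSpace α]
    [SigmaFinite (volume : Measure α)] {p : (Fin (n + 1) → α) → Prop}
    (hp : MeasurableSet {x | p x}) (h : ∀ᵐ z : Fin n → α, ∀ᵐ y : α, p (Fin.cons y z)) :
    ∀ᵐ x, p x := by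
  have hmp := (volume_preserving_piFinSuccAbove (fun _ : Fin (n + 1) => α) 0).symm
  have hp' : MeasurableSet {w | p ((MeasurableEquiv.piFinSuccAbove (fun _ => α) 0).symm w)} :=
    hmp.measurable hp
  rw [← hmp.map_eq, ae_map_iff hmp.measurable.aemeasurable hp, Measure.volume_eq_prod,
    Measure.ae_prod_iff_ae_ae hp', Measure.ae_ae_comm hp']
  simp only [MeasurableEquiv.piFinSuccAbove_symm_apply, Fin.insertNthEquiv_zero]
  exact h

namespace MvPolynomial

theorem ae_eval_ne_zero_of_fin {n : ℕ} {p : MvPolynomial (Fin n) ℝ} (hp : p ≠ 0) :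
    ∀ᵐ x, eval x p ≠ 0 := by
  induction n with
  | zero =>
    obtain ⟨c, rfl⟩ := C_surjective (Fin 0) p
    exact ae_of_all _ fun x => by simpa using hp
  | succ n ih =>
    set q := finSuccEquiv ℝ n p
    have hq : q ≠ 0 := (map_ne_zero_iff _ (finSuccEquiv ℝ n).injective).mpr hp
    refine ae_of_ae_ae_fin_cons
      ((continuous_eval p).measurable (measurableSet_singleton 0)).compl ?_
    filter_upwards [ih (Polynomial.leadingCoeff_ne_zero.mpr hq)] with z hz
    have hqz : q.map (eval z) ≠ 0 := fun h => hz <| by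
      simpa [Polynomial.coeff_map] using congrArg (Polynomial.coeff · q.natDegree) h
    refine measure_mono_null (fun y hy => ?_)
      ((Polynomial.finite_setOfPred_isRoot hqz).measure_zero volume)
    simpa [eval_eq_eval_mv_eval'] using hy

theorem ae_eval_ne_zero {ι : Type*} [Fintype ι] {p : MvPolynomial ι ℝ} (hp : p ≠ 0) :
    ∀ᵐ x, eval x p ≠ 0 := by
  let f := Fintype.equivFin ι
  have h := ae_eval_ne_zero_of_fin ((map_ne_zero_iff _ (rename_injective _ f.injective)).mpr hp)
  filter_upwards
    [((LinearEquiv.funCongrLeft ℝ ℝ f.symm).quasiMeasurePreserving volume volume).ae h] with x hx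
  simpa [eval_rename, Function.comp_def] using hx

end MvPolynomial

namespace Matrix

variable {K m n : Type*} [Field K] [Fintype n]

theorem le_rank_of_det_submatrix_ne_zero {k : ℕ} (A : Matrix m n K) (r : Fin k → m)
    (c : Fin k → n) (h : (A.submatrix r c).det ≠ 0) : k ≤ A.rank :=
  calc k = (A.submatrix r c).rank := by
        rw [rank_of_isUnit _ ((isUnit_iff_isUnit_det _).mpr h.isUnit), Fintype.card_fin]
    _ ≤ A.rank := rank_submatrix_le A r c

variable [Fintype m]

theorem exists_linearIndependent_row_submatrix (A : Matrix m n K) :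
    ∃ r : Fin A.rank → m, LinearIndependent K (A.submatrix r id).row := by
  obtain ⟨κ, a, ha, hspan, hli⟩ := exists_linearIndependent' K A.row
  have : Finite κ := .of_injective a ha
  have := Fintype.ofFinite κ
  have hcard : Fintype.card κ = A.rank := by
    rw [rank_eq_finrank_span_row, ← hspan, linearIndependent_iff_card_eq_finrank_span.mp hli,
      Set.finrank]
  exact ⟨a ∘ (Fintype.equivFinOfCardEq hcard).symm, hli.comp _ (Equiv.injective _)⟩

theorem exists_submatrix_det_ne_zero (A : Matrix m n K) :
    ∃ (r : Fin A.rank → m) (c : Fin A.rank → n), (A.submatrix r c).det ≠ 0 := by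
  obtain ⟨r, hr⟩ := A.exists_linearIndependent_row_submatrix
  have hrank : (A.submatrix r id)ᵀ.rank = A.rank := by
    rw [rank_transpose, hr.rank_matrix, Fintype.card_fin]
  obtain ⟨c, hc⟩ := (A.submatrix r id)ᵀ.exists_linearIndependent_row_submatrix
  have hunit : IsUnit ((A.submatrix r id)ᵀ.submatrix (c ∘ Fin.cast hrank.symm) id) :=
    linearIndependent_rows_iff_isUnit.mp (hc.comp _ (Fin.cast_injective _))
  refine ⟨r, c ∘ Fin.cast hrank.symm, ?_⟩
  rw [← det_transpose, transpose_submatrix]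
  simpa [transpose_submatrix] using ((isUnit_iff_isUnit_det _).mp hunit).ne_zero

theorem ae_rank_map_eval_ge {ι : Type*} [Fintype ι] (M : Matrix m n (MvPolynomial ι ℝ))
    (x₀ : ι → ℝ) :
    ∀ᵐ x, (M.map (MvPolynomial.eval x₀)).rank ≤ (M.map (MvPolynomial.eval x)).rank := by
  obtain ⟨r, c, hrc⟩ := (M.map (MvPolynomial.eval x₀)).exists_submatrix_det_ne_zero
  have heval : ∀ x, MvPolynomial.eval x (M.submatrix r c).det =
      ((M.map (MvPolynomial.eval x)).submatrix r c).det := fun x => by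
    rw [RingHom.map_det, RingHom.mapMatrix_apply, submatrix_map]
  have hp : (M.submatrix r c).det ≠ 0 := fun h => hrc (by rw [← heval, h, map_zero])
  filter_upwards [MvPolynomial.ae_eval_ne_zero hp] with x hx
  exact le_rank_of_det_submatrix_ne_zero _ r c (heval x ▸ hx)

end Matrix

section TensorTrain

variable {N : ℕ} (Idim Jdim : Fin N → ℕ) (R : Fin (N + 1) → ℕ)

abbrev CoreIndex : Type :=
  Σ k : Fin N, Fin (R k.castSucc) × Fin (Idim k) × Fin (Jdim k) × Fin (R k.succ)

def coreFlatten : CoreSpace Idim Jdim R ≃ₗ[ℝ] (CoreIndex Idim Jdim R → ℝ) where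
  toFun G s := G s.1 s.2.1 s.2.2.1 s.2.2.2.1 s.2.2.2.2
  invFun x k a i j b := x ⟨k, a, i, j, b⟩
  map_add' _ _ := rfl
  map_smul' _ _ := rfl
  left_inv _ := rfl
  right_inv _ := rfl

variable (eI : Fin (∏ k, Idim k) ≃ (∀ k, Fin (Idim k)))
  (eJ : Fin (∏ k, Jdim k) ≃ (∀ k, Fin (Jdim k)))

def ttPolyMatrix :
    Matrix (Fin (∏ k, Idim k)) (Fin (∏ k, Jdim k)) (MvPolynomial (CoreIndex Idim Jdim R) ℝ) :=
  Matrix.of fun i j => ∑ r : ∀ k : Fin (N + 1), Fin (R k),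
    ∏ k : Fin N, MvPolynomial.X ⟨k, r k.castSucc, eI i k, eJ j k, r k.succ⟩

theorem ttPolyMatrix_map_eval (G : CoreSpace Idim Jdim R) :
    (ttPolyMatrix Idim Jdim R eI eJ).map (MvPolynomial.eval (coreFlatten Idim Jdim R G)) =
      ttMatrix Idim Jdim R eI eJ G := by
  ext i j
  simp [ttPolyMatrix, ttMatrix, coreFlatten]

-- The Borel and Haar instances on the nested pi type `CoreSpace` need a large instance search.
set_option synthInstance.maxSize 2048 in
theorem ae_rank_ttMatrix_ge (G₀ : CoreSpace Idim Jdim R) :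
    ∀ᵐ G : CoreSpace Idim Jdim R,
      (ttMatrix Idim Jdim R eI eJ G₀).rank ≤ (ttMatrix Idim Jdim R eI eJ G).rank := by
  simpa only [ttPolyMatrix_map_eval] using
    ((coreFlatten Idim Jdim R).quasiMeasurePreserving volume volume).ae
      ((ttPolyMatrix Idim Jdim R eI eJ).ae_rank_map_eval_ge (coreFlatten Idim Jdim R G₀))

end TensorTrain

theorem tt_ae_full_rank_general {N : ℕ} (Idim Jdim : Fin N → ℕ)
    (R : Fin (N + 1) → ℕ)
    (eI : Fin (∏ k, Idim k) ≃ (∀ k, Fin (Idim k)))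
    (eJ : Fin (∏ k, Jdim k) ≃ (∀ k, Fin (Jdim k)))
    (hex : ∃ G₀ : CoreSpace Idim Jdim R,
      (ttMatrix Idim Jdim R eI eJ G₀).rank = min (∏ k, Idim k) (∏ k, Jdim k)) :
    ∀ᵐ G : CoreSpace Idim Jdim R,
      (ttMatrix Idim Jdim R eI eJ G).rank = min (∏ k, Idim k) (∏ k, Jdim k) := by
  obtain ⟨G₀, hG₀⟩ := hex
  filter_upwards [ae_rank_ttMatrix_ge Idim Jdim R eI eJ G₀] with G hG
  set X := ttMatrix Idim Jdim R eI eJ G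
  refine le_antisymm ?_ (hG₀ ▸ hG)
  simpa only [Fintype.card_fin] using le_min X.rank_le_card_height X.rank_le_card_width

/-- if some tuple of TT-cores assembles to a matrix of rank `min I J`,
then almost every tuple of TT-cores assembles to a matrix of full rank `min I J`. -/
theorem tt_ae_full_rank {N : ℕ} (hN : 1 ≤ N) (Idim Jdim : Fin N → ℕ)
    (hI : ∀ k, 0 < Idim k) (hJ : ∀ k, 0 < Jdim k)
    (R : Fin (N + 1) → ℕ) (hR0 : R 0 = 1) (hRN : R (Fin.last N) = 1) (hRpos : ∀ k, 0 < R k)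
    (eI : Fin (∏ k, Idim k) ≃ (∀ k, Fin (Idim k)))
    (eJ : Fin (∏ k, Jdim k) ≃ (∀ k, Fin (Jdim k)))
    (hex : ∃ G₀ : CoreSpace Idim Jdim R,
      (ttMatrix Idim Jdim R eI eJ G₀).rank = min (∏ k, Idim k) (∏ k, Jdim k)) :
    ∀ᵐ G : CoreSpace Idim Jdim R,
      (ttMatrix Idim Jdim R eI eJ G).rank = min (∏ k, Idim k) (∏ k, Jdim k) :=
  tt_ae_full_rank_general Idim Jdim R eI eJ hex
end
end

section
/- Every matrix E ∈ ℝ^{I×J} admits a TT-matrix representation with the given shapes whose TT-ranks satisfy R_k ≤ min(∏_{l=1}^{k} I_l J_l, ∏_{l=k+1}^{N} I_l J_l) for each k = 1,…,N−1; that is, there exists a tuple of TT-cores G with these ranks such that X(G) = E. -/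
noncomputable section TTProofAux

namespace TTProof

open BigOperators Finset

variable {N : ℕ} (Idim Jdim : Fin N → ℕ)






/-- product of `Idim l * Jdim l` over `l < n` -/
def Pn (n : ℕ) : ℕ := ∏ l ∈ univ.filter (fun l : Fin N => (l : ℕ) < n), Idim l * Jdim l
/-- product of `Idim l * Jdim l` over `l ≥ n` -/
def Qn (n : ℕ) : ℕ := ∏ l ∈ univ.filter (fun l : Fin N => ¬ (l : ℕ) < n), Idim l * Jdim l

abbrev LeftT (n : ℕ) : Type :=
  ∀ l : {l : Fin N // (l : ℕ) < n}, Fin (Idim l.1) × Fin (Jdim l.1)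
abbrev RightT (n : ℕ) : Type :=
  ∀ l : {l : Fin N // ¬ (l : ℕ) < n}, Fin (Idim l.1) × Fin (Jdim l.1)

lemma card_leftT (n : ℕ) : Fintype.card (LeftT Idim Jdim n) = Pn Idim Jdim n := by
  rw [show Fintype.card (LeftT Idim Jdim n)
      = ∏ l : {l : Fin N // (l : ℕ) < n}, Idim l.1 * Jdim l.1 by
    simp [LeftT, Fintype.card_pi]]
  exact (Finset.prod_subtype _ (by simp) (fun l => Idim l * Jdim l)).symm

lemma card_rightT (n : ℕ) : Fintype.card (RightT Idim Jdim n) = Qn Idim Jdim n := by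
  rw [show Fintype.card (RightT Idim Jdim n)
      = ∏ l : {l : Fin N // ¬ (l : ℕ) < n}, Idim l.1 * Jdim l.1 by
    simp [RightT, Fintype.card_pi]]
  exact (Finset.prod_subtype _ (by simp) (fun l => Idim l * Jdim l)).symm

variable (hI : ∀ k, 0 < Idim k) (hJ : ∀ k, 0 < Jdim k)

include hI hJ in
lemma one_le_Pn (n : ℕ) : 1 ≤ Pn Idim Jdim n :=
  Finset.prod_pos (fun l _ => Nat.mul_pos (hI l) (hJ l))

include hI hJ in
lemma one_le_Qn (n : ℕ) : 1 ≤ Qn Idim Jdim n :=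
  Finset.prod_pos (fun l _ => Nat.mul_pos (hI l) (hJ l))

include hI hJ in
lemma Pn_mono {a b : ℕ} (h : a ≤ b) : Pn Idim Jdim a ≤ Pn Idim Jdim b := by
  apply Finset.prod_le_prod_of_subset_of_one_le'
  · exact Finset.monotone_filter_right _ (fun l hl => by omega)
  · exact fun l _ _ => Nat.one_le_iff_ne_zero.2 (Nat.mul_pos (hI l) (hJ l)).ne'

include hI hJ in
lemma Qn_anti {a b : ℕ} (h : a ≤ b) : Qn Idim Jdim b ≤ Qn Idim Jdim a := by
  apply Finset.prod_le_prod_of_subset_of_one_le'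
  · exact Finset.monotone_filter_right _ (fun l hl => by omega)
  · exact fun l _ _ => Nat.one_le_iff_ne_zero.2 (Nat.mul_pos (hI l) (hJ l)).ne'

lemma Pn_zero : Pn Idim Jdim 0 = 1 := by simp [Pn]
lemma Qn_N : Qn Idim Jdim N = 1 := by
  rw [Qn]
  apply Finset.prod_eq_one
  intro l hl
  simp only [mem_filter, mem_univ, true_and] at hl
  exact absurd l.isLt hl


variable (m : ℕ)

/-- TT-ranks: left-cardinality before the pivot `m`, right-cardinality from `m` on. -/
def Rk (k : Fin (N+1)) : ℕ :=
  if (k : ℕ) < m then Fintype.card (LeftT Idim Jdim (k : ℕ))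
  else Fintype.card (RightT Idim Jdim (k : ℕ))

def rho (k : Fin (N+1)) (h : (k : ℕ) < m) :
    Fin (Rk Idim Jdim m k) ≃ LeftT Idim Jdim (k : ℕ) :=
  (finCongr (by rw [Rk, if_pos h])).trans (Fintype.equivFin _).symm

def sig (k : Fin (N+1)) (h : ¬ (k : ℕ) < m) :
    Fin (Rk Idim Jdim m k) ≃ RightT Idim Jdim (k : ℕ) :=
  (finCongr (by rw [Rk, if_neg h])).trans (Fintype.equivFin _).symm

/-- extend a left tuple by the entries at position `k` -/
def extL (k : Fin N) (a : LeftT Idim Jdim (k : ℕ)) (i : Fin (Idim k)) (j : Fin (Jdim k)) :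
    LeftT Idim Jdim ((k : ℕ) + 1) :=
  fun l => if h : (l.1 : ℕ) < (k : ℕ) then a ⟨l.1, h⟩ else
    have hk : l.1 = k := Fin.ext (by have := l.2; omega)
    (Fin.cast (congrArg Idim hk).symm i, Fin.cast (congrArg Jdim hk).symm j)

/-- extend a right tuple by the entries at position `k` -/
def extR (k : Fin N) (i : Fin (Idim k)) (j : Fin (Jdim k))
    (c : RightT Idim Jdim ((k : ℕ) + 1)) : RightT Idim Jdim (k : ℕ) :=
  fun l => if h : ¬ (l.1 : ℕ) < (k : ℕ) + 1 then c ⟨l.1, h⟩ else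
    have hk : l.1 = k := Fin.ext (by have := l.2; omega)
    (Fin.cast (congrArg Idim hk).symm i, Fin.cast (congrArg Jdim hk).symm j)

/-- assemble a full row-index tuple -/
def fullI (k : Fin N) (a : LeftT Idim Jdim (k : ℕ)) (i : Fin (Idim k))
    (c : RightT Idim Jdim ((k : ℕ) + 1)) : ∀ l : Fin N, Fin (Idim l) :=
  fun l => if h : (l : ℕ) < (k : ℕ) then (a ⟨l, h⟩).1
    else if h2 : (l : ℕ) = (k : ℕ) then Fin.cast (congrArg Idim (Fin.ext h2)).symm i
    else (c ⟨l, by omega⟩).1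

/-- assemble a full column-index tuple -/
def fullJ (k : Fin N) (a : LeftT Idim Jdim (k : ℕ)) (j : Fin (Jdim k))
    (c : RightT Idim Jdim ((k : ℕ) + 1)) : ∀ l : Fin N, Fin (Jdim l) :=
  fun l => if h : (l : ℕ) < (k : ℕ) then (a ⟨l, h⟩).2
    else if h2 : (l : ℕ) = (k : ℕ) then Fin.cast (congrArg Jdim (Fin.ext h2)).symm j
    else (c ⟨l, by omega⟩).2

variable (E : Matrix (Fin (∏ k, Idim k)) (Fin (∏ k, Jdim k)) ℝ)
    (eI : Fin (∏ k, Idim k) ≃ (∀ k, Fin (Idim k)))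
    (eJ : Fin (∏ k, Jdim k) ≃ (∀ k, Fin (Jdim k)))

def core (k : Fin N) (r : Fin (Rk Idim Jdim m k.castSucc)) (i : Fin (Idim k))
    (j : Fin (Jdim k)) (s : Fin (Rk Idim Jdim m k.succ)) : ℝ :=
  if h1 : (k : ℕ) + 1 < m then
    if rho Idim Jdim m k.succ (by simp only [Fin.val_succ]; omega) s
        = extL Idim Jdim k
            (rho Idim Jdim m k.castSucc (by simp only [Fin.coe_castSucc]; omega) r) i j
      then 1 else 0
  else if h2 : (k : ℕ) < m then
    E (eI.symm (fullI Idim Jdim k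
          (rho Idim Jdim m k.castSucc (by simp only [Fin.coe_castSucc]; omega) r) i
          (sig Idim Jdim m k.succ (by simp only [Fin.val_succ]; omega) s)))
      (eJ.symm (fullJ Idim Jdim k
          (rho Idim Jdim m k.castSucc (by simp only [Fin.coe_castSucc]; omega) r) j
          (sig Idim Jdim m k.succ (by simp only [Fin.val_succ]; omega) s)))
  else
    if sig Idim Jdim m k.castSucc (by simp only [Fin.coe_castSucc]; omega) r
        = extR Idim Jdim k i j
            (sig Idim Jdim m k.succ (by simp only [Fin.val_succ]; omega) s)
      then 1 else 0


/-- the left/right tuples obtained by restricting full index tuples -/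
def leftOf (i' : ∀ l, Fin (Idim l)) (j' : ∀ l, Fin (Jdim l)) (n : ℕ) :
    LeftT Idim Jdim n := fun l => (i' l.1, j' l.1)
def rightOf (i' : ∀ l, Fin (Idim l)) (j' : ∀ l, Fin (Jdim l)) (n : ℕ) :
    RightT Idim Jdim n := fun l => (i' l.1, j' l.1)

/-- the canonical rank tuple associated to full index tuples -/
def rstar (i' : ∀ l, Fin (Idim l)) (j' : ∀ l, Fin (Jdim l)) (k : Fin (N+1)) :
    Fin (Rk Idim Jdim m k) :=
  if h : (k : ℕ) < m then (rho Idim Jdim m k h).symm (leftOf Idim Jdim i' j' (k : ℕ))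
  else (sig Idim Jdim m k h).symm (rightOf Idim Jdim i' j' (k : ℕ))

lemma rho_rstar (i' : ∀ l, Fin (Idim l)) (j' : ∀ l, Fin (Jdim l)) (k : Fin (N+1))
    (h : (k : ℕ) < m) :
    rho Idim Jdim m k h (rstar Idim Jdim m i' j' k) = leftOf Idim Jdim i' j' (k : ℕ) := by
  simp only [rstar, dif_pos h, Equiv.apply_symm_apply]

lemma sig_rstar (i' : ∀ l, Fin (Idim l)) (j' : ∀ l, Fin (Jdim l)) (k : Fin (N+1))
    (h : ¬ (k : ℕ) < m) :
    sig Idim Jdim m k h (rstar Idim Jdim m i' j' k) = rightOf Idim Jdim i' j' (k : ℕ) := by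
  simp only [rstar, dif_neg h, Equiv.apply_symm_apply]

lemma extL_eval (k : Fin N) (i' : ∀ l, Fin (Idim l)) (j' : ∀ l, Fin (Jdim l)) :
    extL Idim Jdim k (leftOf Idim Jdim i' j' (k : ℕ)) (i' k) (j' k)
      = leftOf Idim Jdim i' j' ((k : ℕ) + 1) := by
  funext l
  obtain ⟨l, hl⟩ := l
  simp only [extL, leftOf]
  split_ifs with h
  · rfl
  · have hk : l = k := Fin.ext (by omega)
    subst hk
    rfl

lemma extR_eval (k : Fin N) (i' : ∀ l, Fin (Idim l)) (j' : ∀ l, Fin (Jdim l)) :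
    extR Idim Jdim k (i' k) (j' k) (rightOf Idim Jdim i' j' ((k : ℕ) + 1))
      = rightOf Idim Jdim i' j' (k : ℕ) := by
  funext l
  obtain ⟨l, hl⟩ := l
  simp only [extR, rightOf]
  split_ifs with h
  · have hk : l = k := Fin.ext (by omega)
    subst hk
    rfl
  · rfl

lemma fullI_eval (k : Fin N) (i' : ∀ l, Fin (Idim l)) (j' : ∀ l, Fin (Jdim l)) :
    fullI Idim Jdim k (leftOf Idim Jdim i' j' (k : ℕ)) (i' k)
      (rightOf Idim Jdim i' j' ((k : ℕ) + 1)) = i' := by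
  funext l
  simp only [fullI, leftOf, rightOf]
  split_ifs with h h2
  · rfl
  · have hk : l = k := Fin.ext h2
    subst hk; rfl
  · rfl

lemma fullJ_eval (k : Fin N) (i' : ∀ l, Fin (Idim l)) (j' : ∀ l, Fin (Jdim l)) :
    fullJ Idim Jdim k (leftOf Idim Jdim i' j' (k : ℕ)) (j' k)
      (rightOf Idim Jdim i' j' ((k : ℕ) + 1)) = j' := by
  funext l
  simp only [fullJ, leftOf, rightOf]
  split_ifs with h h2
  · rfl
  · have hk : l = k := Fin.ext h2
    subst hk; rfl
  · rfl


lemma core_prod (hm1 : 1 ≤ m) (hm2 : m ≤ N) (i : Fin (∏ k, Idim k)) (j : Fin (∏ k, Jdim k))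
    (r : ∀ k : Fin (N+1), Fin (Rk Idim Jdim m k)) :
    (∏ k : Fin N, core Idim Jdim m E eI eJ k (r k.castSucc) (eI i k) (eJ j k) (r k.succ))
      = if r = rstar Idim Jdim m (eI i) (eJ j) then E i j else 0 := by
  classical
  set i' := eI i with hi'
  set j' := eJ j with hj'
  by_cases hr : r = rstar Idim Jdim m i' j'
  · rw [if_pos hr]; subst hr
    have hk0N : m - 1 < N := by omega
    rw [Finset.prod_eq_single (⟨m - 1, hk0N⟩ : Fin N)]
    · have e1 : ¬ (((⟨m - 1, hk0N⟩ : Fin N) : ℕ) + 1 < m) := by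
        show ¬ (m - 1 + 1 < m); omega
      have e2 : ((⟨m - 1, hk0N⟩ : Fin N) : ℕ) < m := by
        show m - 1 < m; omega
      rw [core, dif_neg e1, dif_pos e2, rho_rstar, sig_rstar]
      simp only [Fin.coe_castSucc, Fin.val_succ]
      rw [fullI_eval, fullJ_eval, hi', hj', Equiv.symm_apply_apply, Equiv.symm_apply_apply]
    · intro k _ hk
      have hkm : (k : ℕ) ≠ m - 1 := fun h => hk (Fin.ext (by simpa using h))
      rcases lt_or_ge ((k : ℕ) + 1) m with h1 | h1
      · rw [core, dif_pos h1, rho_rstar, rho_rstar]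
        simp only [Fin.coe_castSucc, Fin.val_succ]
        exact if_pos (extL_eval Idim Jdim k i' j').symm
      · have h2 : ¬ (k : ℕ) < m := by omega
        rw [core, dif_neg (show ¬ ((k : ℕ) + 1 < m) by omega), dif_neg h2,
          sig_rstar, sig_rstar]
        simp only [Fin.coe_castSucc, Fin.val_succ]
        exact if_pos (extR_eval Idim Jdim k i' j').symm
    · intro h; exact absurd (Finset.mem_univ _) h
  · rw [if_neg hr]
    by_contra hne
    apply hr
    have hfac : ∀ k : Fin N,
        core Idim Jdim m E eI eJ k (r k.castSucc) (i' k) (j' k) (r k.succ) ≠ 0 :=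
      fun k h0 => hne (Finset.prod_eq_zero (Finset.mem_univ k) h0)
    have fwd : ∀ n, n < m → ∀ (hn2 : n < N + 1),
        r ⟨n, hn2⟩ = rstar Idim Jdim m i' j' ⟨n, hn2⟩ := by
      intro n
      induction n with
      | zero =>
        intro hn hn2
        have h1 : Rk Idim Jdim m ⟨0, hn2⟩ = 1 := by
          rw [Rk, if_pos (show ((⟨0, hn2⟩ : Fin (N+1)) : ℕ) < m from hn), card_leftT]
          exact Pn_zero Idim Jdim
        have ha := ((r ⟨0, hn2⟩).isLt).trans_eq h1
        have hb := ((rstar Idim Jdim m i' j' ⟨0, hn2⟩).isLt).trans_eq h1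
        exact Fin.ext (by omega)
      | succ n ih =>
        intro hn hn2
        have hkN : n < N := by omega
        set k : Fin N := ⟨n, hkN⟩ with hkdef
        have hc := hfac k
        have h1 : (k : ℕ) + 1 < m := hn
        rw [core, dif_pos h1] at hc
        have hcond : rho Idim Jdim m k.succ (by simp only [Fin.val_succ]; omega) (r k.succ)
            = extL Idim Jdim k
                (rho Idim Jdim m k.castSucc (by simp only [Fin.coe_castSucc]; omega)
                  (r k.castSucc)) (i' k) (j' k) := by
          by_contra hcc
          rw [if_neg hcc] at hc
          exact hc rfl
        have hprev : r k.castSucc = rstar Idim Jdim m i' j' k.castSucc :=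
          ih (by omega) (by omega)
        rw [hprev, rho_rstar] at hcond
        simp only [Fin.coe_castSucc, Fin.val_succ] at hcond
        rw [extL_eval] at hcond
        show r k.succ = rstar Idim Jdim m i' j' k.succ
        apply (rho Idim Jdim m k.succ (by simp only [Fin.val_succ]; omega)).injective
        exact hcond.trans (by rw [rho_rstar]; simp only [Fin.val_succ])
    have bwd : ∀ t n, n = N - t → m ≤ n → ∀ (hn2 : n < N + 1),
        r ⟨n, hn2⟩ = rstar Idim Jdim m i' j' ⟨n, hn2⟩ := by
      intro t
      induction t with
      | zero =>
        intro n hn hmn hn2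
        have hq : Qn Idim Jdim n = 1 := by
          rw [show n = N by omega]; exact Qn_N Idim Jdim
        have h1 : Rk Idim Jdim m ⟨n, hn2⟩ = 1 := by
          rw [Rk, if_neg (show ¬ ((⟨n, hn2⟩ : Fin (N+1)) : ℕ) < m from by
            show ¬ n < m; omega), card_rightT]
          exact hq
        have ha := ((r ⟨n, hn2⟩).isLt).trans_eq h1
        have hb := ((rstar Idim Jdim m i' j' ⟨n, hn2⟩).isLt).trans_eq h1
        exact Fin.ext (by omega)
      | succ t ih =>
        intro n hn hmn hn2
        have hkN : n < N := by omega
        set k : Fin N := ⟨n, hkN⟩ with hkdef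
        have hc := hfac k
        have h1 : ¬ ((k : ℕ) + 1 < m) := by show ¬ (n + 1 < m); omega
        have h2 : ¬ ((k : ℕ) < m) := by show ¬ (n < m); omega
        rw [core, dif_neg h1, dif_neg h2] at hc
        have hcond : sig Idim Jdim m k.castSucc (by simp only [Fin.coe_castSucc]; omega)
              (r k.castSucc)
            = extR Idim Jdim k (i' k) (j' k)
                (sig Idim Jdim m k.succ (by simp only [Fin.val_succ]; omega) (r k.succ)) := by
          by_contra hcc
          rw [if_neg hcc] at hc
          exact hc rfl
        have hnext : r k.succ = rstar Idim Jdim m i' j' k.succ :=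
          ih (n + 1) (by omega) (by omega) (by omega)
        rw [hnext, sig_rstar] at hcond
        simp only [Fin.coe_castSucc, Fin.val_succ] at hcond
        rw [extR_eval] at hcond
        show r k.castSucc = rstar Idim Jdim m i' j' k.castSucc
        apply (sig Idim Jdim m k.castSucc
          (by simp only [Fin.coe_castSucc]; omega)).injective
        exact hcond.trans (by rw [sig_rstar]; simp only [Fin.coe_castSucc])
    funext k
    rcases lt_or_ge (k : ℕ) m with h | h
    · have := fwd (k : ℕ) h k.isLt
      simpa using this
    · have := bwd (N - (k : ℕ)) (k : ℕ) (by omega) (by omega) k.isLt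
      simpa using this

end TTProof

end TTProofAux



open MeasureTheory BigOperators Finset

noncomputable section

/-- every `I × J` matrix admits a TT-matrix representation with the given shapes
whose TT-ranks satisfy `R_k ≤ min (∏_{l ≤ k} I_l J_l) (∏_{l > k} I_l J_l)` for `k = 1,…,N−1`. -/
theorem tt_representation_exists {N : ℕ} (hN : 1 ≤ N) (Idim Jdim : Fin N → ℕ)
    (hI : ∀ k, 0 < Idim k) (hJ : ∀ k, 0 < Jdim k)
    (eI : Fin (∏ k, Idim k) ≃ (∀ k, Fin (Idim k)))
    (eJ : Fin (∏ k, Jdim k) ≃ (∀ k, Fin (Jdim k)))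
    (E : Matrix (Fin (∏ k, Idim k)) (Fin (∏ k, Jdim k)) ℝ) :
    ∃ R : Fin (N + 1) → ℕ, R 0 = 1 ∧ R (Fin.last N) = 1 ∧ (∀ k, 1 ≤ R k) ∧
      (∀ k : Fin (N + 1), k ≠ 0 → k ≠ Fin.last N →
        R k ≤ min (∏ l ∈ univ.filter fun l : Fin N => l.castSucc < k, Idim l * Jdim l)
                  (∏ l ∈ univ.filter fun l : Fin N => ¬ l.castSucc < k, Idim l * Jdim l)) ∧
      ∃ G : CoreSpace Idim Jdim R, ttMatrix Idim Jdim R eI eJ G = E := by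
  classical
  have hqn : TTProof.Qn Idim Jdim N = 1 := TTProof.Qn_N Idim Jdim
  have hex : ∃ n, 1 ≤ n ∧ n ≤ N ∧ TTProof.Qn Idim Jdim n ≤ TTProof.Pn Idim Jdim n :=
    ⟨N, hN, le_refl N, by rw [hqn]; exact TTProof.one_le_Pn Idim Jdim hI hJ N⟩
  set m := Nat.find hex with hmdef
  obtain ⟨hm1, hm2, hQP⟩ := Nat.find_spec hex
  have hprod : ∀ k : Fin (N + 1),
      (∏ l ∈ univ.filter fun l : Fin N => l.castSucc < k, Idim l * Jdim l)
        = TTProof.Pn Idim Jdim (k : ℕ) := by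
    intro k
    apply Finset.prod_congr ?_ (fun _ _ => rfl)
    apply Finset.filter_congr
    intro l _
    simp [Fin.lt_def]
  have hprodq : ∀ k : Fin (N + 1),
      (∏ l ∈ univ.filter fun l : Fin N => ¬ l.castSucc < k, Idim l * Jdim l)
        = TTProof.Qn Idim Jdim (k : ℕ) := by
    intro k
    apply Finset.prod_congr ?_ (fun _ _ => rfl)
    apply Finset.filter_congr
    intro l _
    simp [Fin.lt_def]
  refine ⟨TTProof.Rk Idim Jdim m, ?_, ?_, ?_, ?_, ?_⟩
  · rw [TTProof.Rk, if_pos (show ((0 : Fin (N + 1)) : ℕ) < m from by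
      simp only [Fin.val_zero]; omega), TTProof.card_leftT]
    simpa using TTProof.Pn_zero Idim Jdim
  · rw [TTProof.Rk, if_neg (show ¬ ((Fin.last N : Fin (N + 1)) : ℕ) < m from by
      simp only [Fin.val_last]; omega), TTProof.card_rightT]
    simpa using hqn
  · intro k
    rw [TTProof.Rk]
    split_ifs with h
    · rw [TTProof.card_leftT]; exact TTProof.one_le_Pn Idim Jdim hI hJ _
    · rw [TTProof.card_rightT]; exact TTProof.one_le_Qn Idim Jdim hI hJ _
  · intro k hk0 hklast
    have hk1 : 1 ≤ (k : ℕ) := by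
      rcases Nat.eq_zero_or_pos (k : ℕ) with h | h
      · exact absurd (Fin.ext h) hk0
      · exact h
    have hkN : (k : ℕ) ≤ N := by omega
    have hkN' : (k : ℕ) ≠ N := fun h => hklast (Fin.ext (by simpa using h))
    rw [hprod k, hprodq k, TTProof.Rk]
    split_ifs with h
    · rw [TTProof.card_leftT]
      have hPQ : TTProof.Pn Idim Jdim (k : ℕ) ≤ TTProof.Qn Idim Jdim (k : ℕ) := by
        have := Nat.find_min hex h
        push_neg at this
        exact le_of_lt (this hk1 hkN)
      exact le_min (le_refl _) hPQ
    · rw [TTProof.card_rightT]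
      have hQP' : TTProof.Qn Idim Jdim (k : ℕ) ≤ TTProof.Pn Idim Jdim (k : ℕ) :=
        le_trans (TTProof.Qn_anti Idim Jdim hI hJ (by omega : m ≤ (k : ℕ)))
          (le_trans hQP (TTProof.Pn_mono Idim Jdim hI hJ (by omega : m ≤ (k : ℕ))))
      exact le_min hQP' (le_refl _)
  · refine ⟨TTProof.core Idim Jdim m E eI eJ, ?_⟩
    ext i j
    rw [ttMatrix]
    show (∑ r : ∀ k : Fin (N + 1), Fin (TTProof.Rk Idim Jdim m k),
      ∏ k : Fin N, TTProof.core Idim Jdim m E eI eJ k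
        (r k.castSucc) (eI i k) (eJ j k) (r k.succ)) = E i j
    rw [Finset.sum_congr rfl
      (fun r _ => TTProof.core_prod Idim Jdim m E eI eJ hm1 hm2 i j r)]
    simp
end
end
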